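/- Let X, Y be real Hilbert spaces, K ⊆ X a nonempty closed convex cone, A : X → X strongly monotone (constant m_A) and Lipschitz, B : X → X Lipschitz, u₀ ∈ X, f ∈ C([0,T];X), R : C([0,T];X) → C([0,T];Y) and S : C([0,T];X) → C([0,T];X) history-dependent operators, and j : Y × K → ℝ satisfying: j(η,·) convex, positively homogeneous, Lipschitz for all η ∈ Y, and j(η₁,v₂)-j(η₁,v₁)+j(η₂,v₁)-j(η₂,v₂) ≤ α_j ∥η₁-η₂∥_Y ∥v₁-v₂∥_X. Then there exists a unique u ∈ C¹([0,T];X) with u(0) = u₀, u̇(t) ∈ K for all t, and j(Ru̇(t), v) - j(Ru̇(t), u̇(t)) ≥ ⟨f(t) - Au̇(t) - Bu(t) - Su̇(t), v - u̇(t)⟩ for all v ∈ K and t ∈ [0,T]. -/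

import Mathlib

/-!
For fixed data `(η, c)` the elliptic inequality `⟪c - A z, v - z⟫ ≤ j η v - j η z` (all `v ∈ K`)
has a solution `z ∈ K`: `z` is the fixed point of the contraction `z ↦ P (z - ρ (A z - c))`, where
`P x` minimizes the strongly convex function `‖v - x‖² / 2 + ρ j η v` over `K`. Strong
monotonicity of `A` and the coupling condition on `j` make this solution depend Lipschitz
continuously on `(η, c)`.

Writing `u = u₀ + ∫₀ᵗ w`, the problem becomes the fixed point equation `w = Λ w` on `C([0,T]; X)`,
`(Λ w)(t)` being the solution with data `(R w t, f t - B (u t) - S w t)`. Since `R`, `S` and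
`w ↦ B (u₀ + ∫₀ᵗ w)` are history-dependent, `‖Λ w₁ t - Λ w₂ t‖ ≤ C ∫₀ᵗ ‖w₁ - w₂‖`. Hence
`Λⁿ` is Lipschitz with constant `(C T)ⁿ / n!`, and some iterate is a contraction; for two
solutions the same estimate and Grönwall's inequality give `w₁ = w₂`.
-/

open RealInnerProductSpace
open Set Filter Topology

theorem StrongConvexOn.exists_isMinOn {E : Type*} [NormedAddCommGroup E] [NormedSpace ℝ E]
    [CompleteSpace E] {K : Set E} {m : ℝ} {F : E → ℝ} (hF : StrongConvexOn K m F) (hm : 0 < m)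
    (hKne : K.Nonempty) (hKcl : IsClosed K) (hFc : ContinuousOn F K)
    (hFb : BddBelow (F '' K)) :
    ∃ p ∈ K, IsMinOn F K p := by
  obtain ⟨hKcv, hF⟩ := hF
  set d := sInf (F '' K)
  have hd : ∀ v ∈ K, d ≤ F v := fun v hv => csInf_le hFb (mem_image_of_mem F hv)
  obtain ⟨y, -, hy, hyF⟩ :
      ∃ y : ℕ → ℝ, Antitone y ∧ Tendsto y atTop (𝓝 d) ∧ ∀ n, y n ∈ F '' K :=
    exists_seq_tendsto_sInf (hKne.image F) hFb
  choose x hxK hxy using hyF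
  have hmid : ∀ v ∈ K, ∀ w ∈ K, ‖v - w‖ ^ 2 ≤ 8 / m * ((F v + F w) / 2 - d) := by
    intro v hv w hw
    have hhalf : (0 : ℝ) ≤ 1 / 2 := by norm_num
    have hconv := hF hv hw hhalf hhalf (add_halves 1)
    have hdmid := hd _ (hKcv hv hw hhalf hhalf (add_halves 1))
    rw [smul_eq_mul, smul_eq_mul] at hconv
    rw [div_mul_eq_mul_div, le_div_iff₀ hm]
    nlinarith
  have hcauchy : CauchySeq x := by
    rw [cauchySeq_iff_tendsto_dist_atTop_0, ← prod_atTop_atTop_eq]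
    have hlim : Tendsto (fun n : ℕ × ℕ => 8 / m * ((y n.1 + y n.2) / 2 - d))
        (atTop ×ˢ atTop) (𝓝 0) := by
      simpa using ((hy.comp tendsto_fst).add (hy.comp tendsto_snd)).div_const 2
        |>.sub_const d |>.const_mul (8 / m)
    refine squeeze_zero (fun _ => dist_nonneg) (fun n => ?_) (by simpa using hlim.sqrt)
    rw [← abs_dist, dist_eq_norm, ← hxy, ← hxy]
    exact Real.abs_le_sqrt (hmid _ (hxK _) _ (hxK _))
  obtain ⟨p, hp⟩ := cauchySeq_tendsto_of_complete hcauchy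
  have hpK : p ∈ K := hKcl.mem_of_tendsto hp (Eventually.of_forall hxK)
  have hFx : Tendsto (F ∘ x) atTop (𝓝 d) := by simpa only [Function.comp_def, hxy] using hy
  have hFp : F p = d := tendsto_nhds_unique
    ((hFc p hpK).tendsto.comp (tendsto_nhdsWithin_iff.2 ⟨hp, Eventually.of_forall hxK⟩)) hFx
  exact ⟨p, hpK, isMinOn_iff.2 fun v hv => hFp ▸ hd v hv⟩

section VariationalInequality

variable {X : Type*} [NormedAddCommGroup X] [InnerProductSpace ℝ X] {K : Set X}

def IsVISolution (K : Set X) (A : X → X) (g : X → ℝ) (c z : X) : Prop :=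
  z ∈ K ∧ ∀ v ∈ K, ⟪c - A z, v - z⟫ ≤ g v - g z

theorem IsVISolution.norm_sub_le {A : X → X} {g₁ g₂ : X → ℝ} {c₁ c₂ z₁ z₂ : X} {mA D : ℝ}
    (hmA : 0 < mA) (hA : ∀ u v, mA * ‖u - v‖ ^ 2 ≤ ⟪A u - A v, u - v⟫)
    (h₁ : IsVISolution K A g₁ c₁ z₁) (h₂ : IsVISolution K A g₂ c₂ z₂) (hD0 : 0 ≤ D)
    (hD : g₁ z₂ - g₁ z₁ + g₂ z₁ - g₂ z₂ ≤ D * ‖z₁ - z₂‖) :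
    ‖z₁ - z₂‖ ≤ (D + ‖c₁ - c₂‖) / mA := by
  have hsum : ⟪c₁ - A z₁, z₂ - z₁⟫ + ⟪c₂ - A z₂, z₁ - z₂⟫ =
      ⟪A z₁ - A z₂, z₁ - z₂⟫ - ⟪c₁ - c₂, z₁ - z₂⟫ := by
    simp only [inner_sub_left, inner_sub_right, real_inner_comm]
    ring
  have hcs := real_inner_le_norm (c₁ - c₂) (z₁ - z₂)
  have hkey : mA * ‖z₁ - z₂‖ ^ 2 ≤ (D + ‖c₁ - c₂‖) * ‖z₁ - z₂‖ := by
    linarith [h₁.2 z₂ h₂.1, h₂.2 z₁ h₁.1, hA z₁ z₂]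
  rw [le_div_iff₀ hmA]
  rcases (norm_nonneg (z₁ - z₂)).eq_or_lt with h0 | h0
  · rw [← h0, zero_mul]
    positivity
  · nlinarith

theorem IsMinOn.isVISolution_id {g : X → ℝ} (hg : ConvexOn ℝ K g) {x p : X} (hp : p ∈ K)
    (hmin : IsMinOn (fun v => ‖v - x‖ ^ 2 / 2 + g v) K p) : IsVISolution K id g x p := by
  refine ⟨hp, fun v hv => ?_⟩
  -- compare with the values on the segment `p + t (v - p)`, divide by `t` and let `t → 0⁺`
  have hdir : ∀ t ∈ Ioc (0 : ℝ) 1,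
      0 ≤ (⟪p - x, v - p⟫ + (g v - g p)) + t * (‖v - p‖ ^ 2 / 2) := by
    rintro t ⟨ht0, ht1⟩
    have hzeq : p + t • (v - p) = (1 - t) • p + t • v := by module
    have hzK : p + t • (v - p) ∈ K := hzeq ▸ hg.1 hp hv (by linarith) ht0.le (by ring)
    have hgz : g (p + t • (v - p)) ≤ (1 - t) * g p + t * g v :=
      hzeq ▸ hg.2 hp hv (by linarith) ht0.le (by ring)
    have hmin_t := isMinOn_iff.1 hmin _ hzK
    have hnorm : ‖p + t • (v - p) - x‖ ^ 2 =
        ‖p - x‖ ^ 2 + 2 * (t * ⟪p - x, v - p⟫) + t ^ 2 * ‖v - p‖ ^ 2 := by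
      rw [add_sub_right_comm, norm_add_sq_real, real_inner_smul_right, norm_smul,
        Real.norm_of_nonneg ht0.le, mul_pow]
    simp only [hnorm] at hmin_t
    nlinarith
  have hlim : Tendsto (fun t : ℝ => (⟪p - x, v - p⟫ + (g v - g p)) + t * (‖v - p‖ ^ 2 / 2))
      (𝓝[>] 0) (𝓝 (⟪p - x, v - p⟫ + (g v - g p))) :=
    ((continuous_const.add (continuous_id.mul continuous_const)).tendsto' 0 _
      (by simp)).mono_left nhdsWithin_le_nhds
  have := ge_of_tendsto hlim (eventually_of_mem (Ioc_mem_nhdsGT one_pos) hdir)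
  rw [id, ← neg_sub p x, inner_neg_left]
  linarith

theorem exists_isVISolution_id [CompleteSpace X] (hKne : K.Nonempty) (hKcl : IsClosed K)
    {g : X → ℝ} (hg : ConvexOn ℝ K g) {L : NNReal} (hgL : LipschitzOnWith L g K) (x : X) :
    ∃ p, IsVISolution K id g x p := by
  set F : X → ℝ := fun v => ‖v - x‖ ^ 2 / 2 + g v
  have hFsc : StrongConvexOn K 1 F := by
    refine strongConvexOn_iff_convex.2 <|
      ((hg.add ((-innerSL ℝ x).toLinearMap.convexOn hg.1)).add_const (‖x‖ ^ 2 / 2)).congr ?_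
    intro v _
    simp only [F, Pi.add_apply, norm_sub_sq_real, ContinuousLinearMap.toLinearMap_neg,
      LinearMap.neg_apply, ContinuousLinearMap.coe_coe, innerSL_apply_apply, real_inner_comm]
    ring
  have hFc : ContinuousOn F K :=
    (by fun_prop : Continuous fun v => ‖v - x‖ ^ 2 / 2).continuousOn.add hgL.continuousOn
  obtain ⟨p₀, hp₀⟩ := hKne
  have hFb : BddBelow (F '' K) := by
    refine ⟨g p₀ - L * ‖p₀ - x‖ - L ^ 2 / 2, forall_mem_image.2 fun v hv => ?_⟩
    have hgv : g p₀ - g v ≤ L * ‖p₀ - v‖ := by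
      simpa [Real.dist_eq, dist_eq_norm] using
        (le_abs_self _).trans (hgL.dist_le_mul p₀ hp₀ v hv)
    have htri := norm_sub_le_norm_sub_add_norm_sub p₀ x v
    rw [← norm_neg (x - v), neg_sub] at htri
    show _ ≤ ‖v - x‖ ^ 2 / 2 + g v
    nlinarith [sq_nonneg (‖v - x‖ - L), mul_le_mul_of_nonneg_left htri L.2]
  obtain ⟨p, hpK, hmin⟩ := hFsc.exists_isMinOn one_pos ⟨p₀, hp₀⟩ hKcl hFc hFb
  exact ⟨p, hmin.isVISolution_id hg hpK⟩

-- `ρ = m_A / L_A²` minimizes the factor `1 - 2 ρ m_A + ρ² L_A²`.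
theorem lipschitzWith_sub_smul_of_strongly_monotone {A : X → X} {mA LA : ℝ} (hmA : 0 < mA)
    (hA : ∀ u v, mA * ‖u - v‖ ^ 2 ≤ ⟪A u - A v, u - v⟫) (hLA : 0 < LA)
    (hAlip : ∀ u v, ‖A u - A v‖ ≤ LA * ‖u - v‖) (c : X) :
    LipschitzWith (NNReal.sqrt (1 - mA ^ 2 / LA ^ 2).toNNReal)
      fun w => w - (mA / LA ^ 2) • (A w - c) := by
  set ρ := mA / LA ^ 2
  have hρ : 0 < ρ := by positivity
  refine lipschitzWith_iff_norm_sub_le.2 fun u v => ?_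
  have hsq : ‖(u - ρ • (A u - c)) - (v - ρ • (A v - c))‖ ^ 2 ≤
      (1 - mA ^ 2 / LA ^ 2) * ‖u - v‖ ^ 2 :=
    calc ‖(u - ρ • (A u - c)) - (v - ρ • (A v - c))‖ ^ 2
        = ‖u - v‖ ^ 2 - 2 * ρ * ⟪A u - A v, u - v⟫ + ρ ^ 2 * ‖A u - A v‖ ^ 2 := by
          rw [show (u - ρ • (A u - c)) - (v - ρ • (A v - c)) = (u - v) - ρ • (A u - A v) by
              module, norm_sub_sq_real, real_inner_smul_right, norm_smul,
            Real.norm_of_nonneg hρ.le, mul_pow, real_inner_comm]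
          ring
      _ ≤ ‖u - v‖ ^ 2 - 2 * ρ * (mA * ‖u - v‖ ^ 2) + ρ ^ 2 * (LA * ‖u - v‖) ^ 2 := by
          gcongr
          · exact hA u v
          · exact hAlip u v
      _ = (1 - mA ^ 2 / LA ^ 2) * ‖u - v‖ ^ 2 := by
          simp only [ρ]
          field_simp
          ring
  rw [← pow_le_pow_iff_left₀ (norm_nonneg _) (by positivity) two_ne_zero, mul_pow,
    ← NNReal.coe_pow, NNReal.sq_sqrt, Real.coe_toNNReal']
  exact hsq.trans (by gcongr; exact le_max_left _ _)

theorem exists_isVISolution [CompleteSpace X] (hKne : K.Nonempty) (hKcl : IsClosed K)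
    {A : X → X} {mA LA : ℝ} (hmA : 0 < mA)
    (hA : ∀ u v, mA * ‖u - v‖ ^ 2 ≤ ⟪A u - A v, u - v⟫) (hLA : 0 < LA)
    (hAlip : ∀ u v, ‖A u - A v‖ ≤ LA * ‖u - v‖) {g : X → ℝ} (hg : ConvexOn ℝ K g)
    {L : NNReal} (hgL : LipschitzOnWith L g K) (c : X) :
    ∃ z, IsVISolution K A g c z := by
  set ρ := mA / LA ^ 2
  have hρ : 0 < ρ := by positivity
  choose P hP using exists_isVISolution_id hKne hKcl (hg.smul hρ.le)
    ((lipschitzWith_smul ρ).comp_lipschitzOnWith hgL)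
  have hPlip : LipschitzWith 1 P := lipschitzWith_iff_norm_sub_le.2 fun x y => by
    simpa using (hP x).norm_sub_le one_pos (fun u v => by simp) (hP y) le_rfl (by simp)
  have hΦ : ContractingWith (NNReal.sqrt (1 - mA ^ 2 / LA ^ 2).toNNReal)
      fun w => P (w - ρ • (A w - c)) := by
    have hq : 1 - mA ^ 2 / LA ^ 2 < 1 := sub_lt_self 1 (by positivity)
    have hlip := hPlip.comp (lipschitzWith_sub_smul_of_strongly_monotone hmA hA hLA hAlip c)
    rw [one_mul] at hlip
    exact ⟨by simpa using NNReal.sqrt_lt_sqrt.2 (Real.toNNReal_lt_one.2 hq), hlip⟩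
  have : Nonempty X := ⟨0⟩
  set z := hΦ.fixedPoint
  have hz : P (z - ρ • (A z - c)) = z := hΦ.fixedPoint_isFixedPt
  obtain ⟨hzK, hzVI⟩ := hz ▸ hP (z - ρ • (A z - c))
  refine ⟨z, hzK, fun v hv => ?_⟩
  have hvi := hzVI v hv
  rw [id, show z - ρ • (A z - c) - z = ρ • (c - A z) by module, real_inner_smul_left] at hvi
  simp only [smul_eq_mul, ← mul_sub] at hvi
  exact le_of_mul_le_mul_left hvi hρ

theorem continuous_of_forall_isVISolution {Y : Type*} [NormedAddCommGroup Y] {A : X → X}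
    {j : Y → X → ℝ} {mA αj : ℝ} (hmA : 0 < mA)
    (hA : ∀ u v, mA * ‖u - v‖ ^ 2 ≤ ⟪A u - A v, u - v⟫) (hαj : 0 ≤ αj)
    (hjb : ∀ η₁ η₂ : Y, ∀ v₁ ∈ K, ∀ v₂ ∈ K,
      j η₁ v₂ - j η₁ v₁ + j η₂ v₁ - j η₂ v₂ ≤ αj * ‖η₁ - η₂‖ * ‖v₁ - v₂‖)
    {η : ℝ → Y} {c z : ℝ → X} (hη : Continuous η) (hc : Continuous c)
    (hz : ∀ t, IsVISolution K A (j (η t)) (c t) (z t)) : Continuous z := by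
  refine continuous_iff_continuousAt.2 fun t => tendsto_iff_norm_sub_tendsto_zero.2 ?_
  refine squeeze_zero (fun _ => norm_nonneg _) (fun s => (hz s).norm_sub_le hmA hA (hz t)
    (by positivity) (hjb _ _ _ (hz s).1 _ (hz t).1)) ?_
  simpa using
    ((by fun_prop : Continuous fun s => (αj * ‖η s - η t‖ + ‖c s - c t‖) / mA).tendsto t)

end VariationalInequality

theorem eq_zero_of_le_mul_integral {φ : ℝ → ℝ} {C T : ℝ} (hφ : Continuous φ)
    (hφ0 : ∀ t ∈ Icc 0 T, 0 ≤ φ t) (h : ∀ t ∈ Icc 0 T, φ t ≤ C * ∫ s in (0 : ℝ)..t, φ s) :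
    ∀ t ∈ Icc 0 T, φ t = 0 := by
  have hderiv : ∀ t, HasDerivAt (fun t => ∫ s in (0 : ℝ)..t, φ s) (φ t) t := fun t =>
    (hφ.integral_hasStrictDerivAt 0 t).hasDerivAt
  have hΦ0 : ∀ t ∈ Icc 0 T, 0 ≤ ∫ s in (0 : ℝ)..t, φ s := fun t ht =>
    intervalIntegral.integral_nonneg ht.1 fun s hs => hφ0 s ⟨hs.1, hs.2.trans ht.2⟩
  -- Grönwall for the primitive `Φ`, which vanishes at `0` and satisfies `Φ' ≤ C Φ`
  have hΦ := eq_zero_of_abs_deriv_le_mul_abs_self_of_eq_zero_right (K := C)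
    (fun t _ => (hderiv t).continuousAt.continuousWithinAt)
    (fun t _ => (hderiv t).hasDerivWithinAt) intervalIntegral.integral_same fun t ht => by
      rw [Real.norm_of_nonneg (hφ0 t (Ico_subset_Icc_self ht)),
        Real.norm_of_nonneg (hΦ0 t (Ico_subset_Icc_self ht))]
      exact h t (Ico_subset_Icc_self ht)
  exact fun t ht => le_antisymm ((h t ht).trans (by rw [hΦ t ht, mul_zero])) (hφ0 t ht)

theorem mul_integral_pow_div_factorial (C t : ℝ) (n : ℕ) :
    C * ∫ s in (0 : ℝ)..t, (C * s) ^ n / n.factorial =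
      (C * t) ^ (n + 1) / (n + 1).factorial := by
  simp only [mul_pow, intervalIntegral.integral_div, intervalIntegral.integral_const_mul,
    integral_pow, Nat.factorial_succ]
  push_cast
  field_simp
  ring

theorem ContinuousMap.exists_isFixedPt_of_norm_sub_le_integral {E : Type*}
    [NormedAddCommGroup E] [NormedSpace ℝ E] [CompleteSpace E] {T C : ℝ} (hT : 0 ≤ T)
    (hC : 0 ≤ C) (Φ : C(Icc 0 T, E) → C(Icc 0 T, E))
    (hΦ : ∀ w₁ w₂ t, ‖Φ w₁ t - Φ w₂ t‖ ≤
      C * ∫ s in (0 : ℝ)..t, ‖IccExtend hT w₁ s - IccExtend hT w₂ s‖) :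
    ∃ w, Function.IsFixedPt Φ w := by
  have hiter : ∀ n w₁ w₂ (t : Icc 0 T),
      ‖Φ^[n] w₁ t - Φ^[n] w₂ t‖ ≤ (C * t) ^ n / n.factorial * dist w₁ w₂ := by
    intro n
    induction n with
    | zero =>
      intro w₁ w₂ t
      simpa [dist_eq_norm] using dist_apply_le_dist (f := w₁) (g := w₂) t
    | succ n ih =>
      intro w₁ w₂ t
      rw [Function.iterate_succ_apply', Function.iterate_succ_apply']
      refine (hΦ _ _ t).trans ?_
      rw [← mul_integral_pow_div_factorial, mul_assoc, ← intervalIntegral.integral_mul_const]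
      gcongr
      refine intervalIntegral.integral_mono_on t.2.1
        (Continuous.intervalIntegrable (by fun_prop) _ _)
        (Continuous.intervalIntegrable (by fun_prop) _ _) fun s hs => ?_
      have hsT : s ∈ Icc 0 T := ⟨hs.1, hs.2.trans t.2.2⟩
      rw [coe_IccExtend, coe_IccExtend, IccExtend_of_mem hT _ hsT, IccExtend_of_mem hT _ hsT]
      exact ih w₁ w₂ ⟨s, hsT⟩
  obtain ⟨n, hn⟩ := (FloorSemiring.tendsto_pow_div_factorial_atTop (C * T)).eventually
    (gt_mem_nhds one_pos) |>.exists
  have hκ : 0 ≤ (C * T) ^ n / n.factorial := by positivity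
  have hcontr : ContractingWith ⟨_, hκ⟩ Φ^[n] := by
    refine ⟨hn, LipschitzWith.of_dist_le_mul fun w₁ w₂ => ?_⟩
    refine (dist_le (by positivity)).2 fun t => ?_
    rw [dist_eq_norm]
    refine (hiter n w₁ w₂ t).trans ?_
    have hCt : 0 ≤ C * t := mul_nonneg hC t.2.1
    have hCtT : C * t ≤ C * T := mul_le_mul_of_nonneg_left t.2.2 hC
    show _ ≤ (C * T) ^ n / n.factorial * dist w₁ w₂
    gcongr
  have : Nonempty C(Icc 0 T, E) := ⟨0⟩
  exact ⟨_, hcontr.isFixedPt_fixedPoint_iterate⟩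

theorem norm_add_integral_sub_add_integral_le {E : Type*} [NormedAddCommGroup E]
    [NormedSpace ℝ E] {w₁ w₂ : ℝ → E} (h₁ : Continuous w₁) (h₂ : Continuous w₂) (x : E) {t : ℝ}
    (ht : 0 ≤ t) :
    ‖(x + ∫ s in (0 : ℝ)..t, w₁ s) - (x + ∫ s in (0 : ℝ)..t, w₂ s)‖ ≤
      ∫ s in (0 : ℝ)..t, ‖w₁ s - w₂ s‖ := by
  rw [add_sub_add_left_eq_sub, ← intervalIntegral.integral_sub (h₁.intervalIntegrable _ _)
    (h₂.intervalIntegrable _ _)]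
  exact intervalIntegral.norm_integral_le_integral_norm ht

theorem eq_add_integral_of_hasDerivWithinAt {E : Type*} [NormedAddCommGroup E]
    [NormedSpace ℝ E] [CompleteSpace E] {u w : ℝ → E} {T : ℝ} (hu : Continuous u)
    (hw : Continuous w) (hderiv : ∀ t ∈ Icc 0 T, HasDerivWithinAt u (w t) (Icc 0 T) t) :
    ∀ t ∈ Icc 0 T, u t = u 0 + ∫ s in (0 : ℝ)..t, w s := by
  intro t ht
  rw [intervalIntegral.integral_eq_sub_of_hasDerivAt_of_le ht.1 hu.continuousOn
    (fun s hs => (hderiv s ⟨hs.1.le, hs.2.le.trans ht.2⟩).hasDerivAt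
      (Icc_mem_nhds hs.1 (hs.2.trans_le ht.2))) (hw.intervalIntegrable _ _)]
  abel

section Evolution

variable {X Y : Type*} [NormedAddCommGroup X] [InnerProductSpace ℝ X] [NormedAddCommGroup Y]
  {T : ℝ} {K : Set X} {A B : X → X} {u₀ : X} {R : (ℝ → X) → ℝ → Y} {S : (ℝ → X) → ℝ → X}
  {j : Y → X → ℝ} {f : ℝ → X} {mA LR LS αj : ℝ} {LB : NNReal}

def IsHistoryDependent {E F : Type*} [NormedAddCommGroup E] [NormedAddCommGroup F] (T L : ℝ)
    (R : (ℝ → E) → ℝ → F) : Prop :=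
  ∀ u₁ u₂ : ℝ → E, Continuous u₁ → Continuous u₂ → ∀ t ∈ Icc (0 : ℝ) T,
    ‖R u₁ t - R u₂ t‖ ≤ L * ∫ s in (0 : ℝ)..t, ‖u₁ s - u₂ s‖

def IsSweepingSolution (T : ℝ) (K : Set X) (A B : X → X) (u₀ : X) (R : (ℝ → X) → ℝ → Y)
    (S : (ℝ → X) → ℝ → X) (j : Y → X → ℝ) (f : ℝ → X) (u w : ℝ → X) : Prop :=
  Continuous u ∧ Continuous w ∧
    (∀ t ∈ Icc (0 : ℝ) T, HasDerivWithinAt u (w t) (Icc (0 : ℝ) T) t) ∧ u 0 = u₀ ∧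
    ∀ t ∈ Icc (0 : ℝ) T, w t ∈ K ∧
      ∀ v ∈ K, j (R w t) v - j (R w t) (w t) ≥ ⟪f t - A (w t) - B (u t) - S w t, v - w t⟫

theorem isVISolution_sub_sub_iff {g : X → ℝ} {a b c z : X} :
    IsVISolution K A g (a - b - c) z ↔
      z ∈ K ∧ ∀ v ∈ K, g v - g z ≥ ⟪a - A z - b - c, v - z⟫ := by
  rw [IsVISolution, show a - b - c - A z = a - A z - b - c by abel]

theorem norm_sub_le_of_isVISolution (hmA : 0 < mA)
    (hA : ∀ u v, mA * ‖u - v‖ ^ 2 ≤ ⟪A u - A v, u - v⟫) (hB : LipschitzWith LB B)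
    (hR : IsHistoryDependent T LR R) (hS : IsHistoryDependent T LS S) (hαj : 0 ≤ αj)
    (hjb : ∀ η₁ η₂ : Y, ∀ v₁ ∈ K, ∀ v₂ ∈ K,
      j η₁ v₂ - j η₁ v₁ + j η₂ v₁ - j η₂ v₂ ≤ αj * ‖η₁ - η₂‖ * ‖v₁ - v₂‖)
    {w₁ w₂ : ℝ → X} (hw₁ : Continuous w₁) (hw₂ : Continuous w₂) {t : ℝ} (ht : t ∈ Icc 0 T)
    {U₁ U₂ z₁ z₂ : X} (hU : ‖U₁ - U₂‖ ≤ ∫ s in (0 : ℝ)..t, ‖w₁ s - w₂ s‖)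
    (h₁ : IsVISolution K A (j (R w₁ t)) (f t - B U₁ - S w₁ t) z₁)
    (h₂ : IsVISolution K A (j (R w₂ t)) (f t - B U₂ - S w₂ t) z₂) :
    ‖z₁ - z₂‖ ≤ (αj * LR + LB + LS) / mA * ∫ s in (0 : ℝ)..t, ‖w₁ s - w₂ s‖ := by
  set I := ∫ s in (0 : ℝ)..t, ‖w₁ s - w₂ s‖
  refine (h₁.norm_sub_le hmA hA h₂ (by positivity) (hjb _ _ _ h₁.1 _ h₂.1)).trans ?_
  rw [div_mul_eq_mul_div]
  gcongr
  have hload : ‖(f t - B U₁ - S w₁ t) - (f t - B U₂ - S w₂ t)‖ ≤ LB * I + LS * I :=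
    calc ‖(f t - B U₁ - S w₁ t) - (f t - B U₂ - S w₂ t)‖
        = ‖(B U₁ - B U₂) + (S w₁ t - S w₂ t)‖ := by
          rw [← norm_neg]
          congr 1
          abel
      _ ≤ LB * I + LS * I := (norm_add_le _ _).trans <|
          add_le_add ((hB.norm_sub_le U₁ U₂).trans (by gcongr)) (hS w₁ w₂ hw₁ hw₂ t ht)
  nlinarith [mul_le_mul_of_nonneg_left (hR w₁ w₂ hw₁ hw₂ t ht) hαj]

theorem exists_isSweepingSolution [CompleteSpace X] (hT : 0 ≤ T) (hKne : K.Nonempty)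
    (hKcl : IsClosed K) {LA : ℝ} (hmA : 0 < mA)
    (hA : ∀ u v, mA * ‖u - v‖ ^ 2 ≤ ⟪A u - A v, u - v⟫) (hLA : 0 < LA)
    (hAlip : ∀ u v, ‖A u - A v‖ ≤ LA * ‖u - v‖) (hB : LipschitzWith LB B)
    (hRc : ∀ u, Continuous u → Continuous (R u)) (hSc : ∀ u, Continuous u → Continuous (S u))
    (hR : IsHistoryDependent T LR R) (hLR : 0 ≤ LR) (hS : IsHistoryDependent T LS S)
    (hLS : 0 ≤ LS) (hj : ∀ η, ConvexOn ℝ K (j η)) (hjL : ∀ η, ∃ L, LipschitzOnWith L (j η) K)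
    (hαj : 0 ≤ αj) (hjb : ∀ η₁ η₂ : Y, ∀ v₁ ∈ K, ∀ v₂ ∈ K,
      j η₁ v₂ - j η₁ v₁ + j η₂ v₁ - j η₂ v₂ ≤ αj * ‖η₁ - η₂‖ * ‖v₁ - v₂‖)
    (hf : Continuous f) (u₀ : X) :
    ∃ u w, IsSweepingSolution T K A B u₀ R S j f u w := by
  choose L hL using hjL
  choose sol hsol using fun η c =>
    exists_isVISolution hKne hKcl hmA hA hLA hAlip (hj η) (hL η) c
  let W (w : C(Icc 0 T, X)) : C(ℝ, X) := ContinuousMap.IccExtend hT w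
  let U (w : C(Icc 0 T, X)) (t : ℝ) : X := u₀ + ∫ s in (0 : ℝ)..t, W w s
  have hUc (w : C(Icc 0 T, X)) : Continuous (U w) := continuous_const.add <|
    intervalIntegral.continuous_primitive (fun _ _ => (W w).continuous.intervalIntegrable _ _) 0
  have hΛc (w : C(Icc 0 T, X)) :
      Continuous fun t => sol (R (W w) t) (f t - B (U w t) - S (W w) t) :=
    continuous_of_forall_isVISolution hmA hA hαj hjb (hRc _ (W w).continuous)
      ((hf.sub (hB.continuous.comp (hUc w))).sub (hSc _ (W w).continuous)) fun t => hsol _ _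
  let Λ (w : C(Icc 0 T, X)) : C(Icc 0 T, X) := ⟨_, (hΛc w).comp continuous_subtype_val⟩
  have hΛ (w₁ w₂ : C(Icc 0 T, X)) (t : Icc 0 T) : ‖Λ w₁ t - Λ w₂ t‖ ≤
      (αj * LR + LB + LS) / mA * ∫ s in (0 : ℝ)..t, ‖W w₁ s - W w₂ s‖ :=
    norm_sub_le_of_isVISolution hmA hA hB hR hS hαj hjb (W w₁).continuous (W w₂).continuous t.2
      (norm_add_integral_sub_add_integral_le (W w₁).continuous (W w₂).continuous u₀ t.2.1)
      (hsol _ _) (hsol _ _)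
  obtain ⟨w, hw⟩ :=
    ContinuousMap.exists_isFixedPt_of_norm_sub_le_integral hT (by positivity) Λ hΛ
  refine ⟨U w, W w, hUc w, (W w).continuous, fun t _ =>
    (((W w).continuous.integral_hasStrictDerivAt 0 t).hasDerivAt.const_add u₀).hasDerivWithinAt,
    by simp [U], fun t ht => isVISolution_sub_sub_iff.1 ?_⟩
  have hwt : W w t = Λ w ⟨t, ht⟩ := by
    rw [hw, ContinuousMap.coe_IccExtend, IccExtend_of_mem hT _ ht]
  exact hwt ▸ hsol _ _

theorem IsSweepingSolution.eqOn [CompleteSpace X] (hmA : 0 < mA)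
    (hA : ∀ u v, mA * ‖u - v‖ ^ 2 ≤ ⟪A u - A v, u - v⟫) (hB : LipschitzWith LB B)
    (hR : IsHistoryDependent T LR R) (hS : IsHistoryDependent T LS S) (hαj : 0 ≤ αj)
    (hjb : ∀ η₁ η₂ : Y, ∀ v₁ ∈ K, ∀ v₂ ∈ K,
      j η₁ v₂ - j η₁ v₁ + j η₂ v₁ - j η₂ v₂ ≤ αj * ‖η₁ - η₂‖ * ‖v₁ - v₂‖)
    {u₁ w₁ u₂ w₂ : ℝ → X} (h₁ : IsSweepingSolution T K A B u₀ R S j f u₁ w₁)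
    (h₂ : IsSweepingSolution T K A B u₀ R S j f u₂ w₂) : EqOn u₁ u₂ (Icc 0 T) := by
  obtain ⟨hu₁, hw₁, hd₁, h0₁, hvi₁⟩ := h₁
  obtain ⟨hu₂, hw₂, hd₂, h0₂, hvi₂⟩ := h₂
  have hrep₁ := eq_add_integral_of_hasDerivWithinAt hu₁ hw₁ hd₁
  have hrep₂ := eq_add_integral_of_hasDerivWithinAt hu₂ hw₂ hd₂
  have hU : ∀ t ∈ Icc 0 T, ‖u₁ t - u₂ t‖ ≤ ∫ s in (0 : ℝ)..t, ‖w₁ s - w₂ s‖ := fun t ht => by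
    rw [hrep₁ t ht, hrep₂ t ht, h0₁, h0₂]
    exact norm_add_integral_sub_add_integral_le hw₁ hw₂ u₀ ht.1
  have hw : ∀ t ∈ Icc 0 T, ‖w₁ t - w₂ t‖ = 0 :=
    eq_zero_of_le_mul_integral (hw₁.sub hw₂).norm (fun _ _ => norm_nonneg _) fun t ht =>
      norm_sub_le_of_isVISolution hmA hA hB hR hS hαj hjb hw₁ hw₂ ht (hU t ht)
        (isVISolution_sub_sub_iff.2 (hvi₁ t ht)) (isVISolution_sub_sub_iff.2 (hvi₂ t ht))
  intro t ht
  rw [hrep₁ t ht, hrep₂ t ht, h0₁, h0₂, intervalIntegral.integral_congr fun s hs => ?_]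
  rw [uIcc_of_le ht.1] at hs
  exact sub_eq_zero.1 (norm_eq_zero.1 (hw s ⟨hs.1, hs.2.trans ht.2⟩))

end Evolution

theorem sweeping_process_existence_uniqueness_general
    {X Y : Type*} [NormedAddCommGroup X] [InnerProductSpace ℝ X] [CompleteSpace X]
    [NormedAddCommGroup Y]
    {T : ℝ} (hT : 0 < T)
    (K : Set X) (hKne : K.Nonempty) (hKcl : IsClosed K)
    (A : X → X) (mA : ℝ) (hmA : 0 < mA)
    (hAmono : ∀ u v : X, mA * ‖u - v‖ ^ 2 ≤ ⟪A u - A v, u - v⟫)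
    (hAlip : ∃ LA : ℝ, 0 < LA ∧ ∀ u v : X, ‖A u - A v‖ ≤ LA * ‖u - v‖)
    (B : X → X) (hBlip : ∃ LB : ℝ, 0 < LB ∧ ∀ u v : X, ‖B u - B v‖ ≤ LB * ‖u - v‖)
    (u₀ : X)
    (R : (ℝ → X) → (ℝ → Y)) (S : (ℝ → X) → (ℝ → X))
    (hRmap : ∀ u : ℝ → X, Continuous u → Continuous (R u))
    (hSmap : ∀ u : ℝ → X, Continuous u → Continuous (S u))
    (hR : ∃ LR : ℝ, 0 < LR ∧
      ∀ u₁ u₂ : ℝ → X, Continuous u₁ → Continuous u₂ → ∀ t ∈ Set.Icc (0:ℝ) T,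
        ‖R u₁ t - R u₂ t‖ ≤ LR * ∫ s in (0:ℝ)..t, ‖u₁ s - u₂ s‖)
    (hS : ∃ LS : ℝ, 0 < LS ∧
      ∀ u₁ u₂ : ℝ → X, Continuous u₁ → Continuous u₂ → ∀ t ∈ Set.Icc (0:ℝ) T,
        ‖S u₁ t - S u₂ t‖ ≤ LS * ∫ s in (0:ℝ)..t, ‖u₁ s - u₂ s‖)
    (j : Y → X → ℝ)
    (hjconv : ∀ η : Y, ConvexOn ℝ K (j η))
    (hjlip : ∀ η : Y, ∃ Lj : ℝ, ∀ v ∈ K, ∀ w ∈ K, |j η v - j η w| ≤ Lj * ‖v - w‖)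
    (αj : ℝ) (hαj : 0 ≤ αj)
    (hjb : ∀ η₁ η₂ : Y, ∀ v₁ ∈ K, ∀ v₂ ∈ K,
      j η₁ v₂ - j η₁ v₁ + j η₂ v₁ - j η₂ v₂ ≤ αj * ‖η₁ - η₂‖ * ‖v₁ - v₂‖)
    (f : ℝ → X) (hf : Continuous f) :
    ∃ u w : ℝ → X,
      (Continuous u ∧ Continuous w ∧
        (∀ t ∈ Set.Icc (0:ℝ) T, HasDerivWithinAt u (w t) (Set.Icc (0:ℝ) T) t) ∧
        u 0 = u₀ ∧
        ∀ t ∈ Set.Icc (0:ℝ) T, w t ∈ K ∧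
          ∀ v ∈ K, j (R w t) v - j (R w t) (w t) ≥
            ⟪f t - A (w t) - B (u t) - S w t, v - w t⟫) ∧
      ∀ u' w' : ℝ → X,
        (Continuous u' ∧ Continuous w' ∧
          (∀ t ∈ Set.Icc (0:ℝ) T, HasDerivWithinAt u' (w' t) (Set.Icc (0:ℝ) T) t) ∧
          u' 0 = u₀ ∧
          ∀ t ∈ Set.Icc (0:ℝ) T, w' t ∈ K ∧
            ∀ v ∈ K, j (R w' t) v - j (R w' t) (w' t) ≥
              ⟪f t - A (w' t) - B (u' t) - S w' t, v - w' t⟫) →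
        ∀ t ∈ Set.Icc (0:ℝ) T, u' t = u t := by
  obtain ⟨LA, hLA, hAlip⟩ := hAlip
  obtain ⟨LB, hLB, hBlip⟩ := hBlip
  obtain ⟨LR, hLR, hR⟩ := hR
  obtain ⟨LS, hLS, hS⟩ := hS
  have hB : LipschitzWith LB.toNNReal B :=
    LipschitzWith.of_dist_le' fun u v => by simpa only [dist_eq_norm] using hBlip u v
  have hjL (η : Y) : ∃ L : NNReal, LipschitzOnWith L (j η) K :=
    let ⟨_, hL⟩ := hjlip η
    ⟨_, LipschitzOnWith.of_dist_le' fun v hv w hw => by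
      rw [Real.dist_eq, dist_eq_norm]
      exact hL v hv w hw⟩
  obtain ⟨u, w, hsol⟩ := exists_isSweepingSolution hT.le hKne hKcl hmA hAmono hLA hAlip hB
    hRmap hSmap hR hLR.le hS hLS.le hjconv hjL hαj hjb hf u₀
  exact ⟨u, w, hsol, fun u' w' h' =>
    IsSweepingSolution.eqOn hmA hAmono hB hR hS hαj hjb h' hsol⟩

/-- Theorem 4.1 / Corollary 4.2 of the paper (variational-inequality form of the
sweeping process `-u̇(t) ∈ N_{C(Ru̇(t),t)}(Au̇(t) + Bu(t) + Su̇(t))`, `u(0)=u₀`):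
with `A` strongly monotone and Lipschitz, `B` Lipschitz, `R, S`
history-dependent, and `j` satisfying condition (j), there is a unique
`u ∈ C¹([0,T];X)` with `u(0) = u₀`, `u̇(t) ∈ K` and
`j(Ru̇(t),v) - j(Ru̇(t),u̇(t)) ≥ ⟪f(t) - Au̇(t) - Bu(t) - Su̇(t), v - u̇(t)⟫`
for all `v ∈ K`, `t ∈ [0,T]`.  Functions on `[0,T]` are represented by
functions on `ℝ`, unique up to their values on `[0,T]`. -/
theorem sweeping_process_existence_uniqueness
    {X Y : Type*} [NormedAddCommGroup X] [InnerProductSpace ℝ X] [CompleteSpace X]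
    [NormedAddCommGroup Y] [InnerProductSpace ℝ Y] [CompleteSpace Y]
    {T : ℝ} (hT : 0 < T)
    (K : Set X) (hKne : K.Nonempty) (hKcl : IsClosed K) (hKcv : Convex ℝ K)
    (hKcone : ∀ c : ℝ, 0 < c → ∀ x ∈ K, c • x ∈ K) (hK0 : (0 : X) ∈ K)
    (A : X → X) (mA : ℝ) (hmA : 0 < mA)
    (hAmono : ∀ u v : X, mA * ‖u - v‖ ^ 2 ≤ ⟪A u - A v, u - v⟫)
    (hAlip : ∃ LA : ℝ, 0 < LA ∧ ∀ u v : X, ‖A u - A v‖ ≤ LA * ‖u - v‖)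
    (B : X → X) (hBlip : ∃ LB : ℝ, 0 < LB ∧ ∀ u v : X, ‖B u - B v‖ ≤ LB * ‖u - v‖)
    (u₀ : X)
    (R : (ℝ → X) → (ℝ → Y)) (S : (ℝ → X) → (ℝ → X))
    (hRmap : ∀ u : ℝ → X, Continuous u → Continuous (R u))
    (hSmap : ∀ u : ℝ → X, Continuous u → Continuous (S u))
    (hR : ∃ LR : ℝ, 0 < LR ∧
      ∀ u₁ u₂ : ℝ → X, Continuous u₁ → Continuous u₂ → ∀ t ∈ Set.Icc (0:ℝ) T,
        ‖R u₁ t - R u₂ t‖ ≤ LR * ∫ s in (0:ℝ)..t, ‖u₁ s - u₂ s‖)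
    (hS : ∃ LS : ℝ, 0 < LS ∧
      ∀ u₁ u₂ : ℝ → X, Continuous u₁ → Continuous u₂ → ∀ t ∈ Set.Icc (0:ℝ) T,
        ‖S u₁ t - S u₂ t‖ ≤ LS * ∫ s in (0:ℝ)..t, ‖u₁ s - u₂ s‖)
    (j : Y → X → ℝ)
    (hjconv : ∀ η : Y, ConvexOn ℝ K (j η))
    (hjpos : ∀ η : Y, ∀ l : ℝ, 0 < l → ∀ v ∈ K, j η (l • v) = l * j η v)
    (hjlip : ∀ η : Y, ∃ Lj : ℝ, ∀ v ∈ K, ∀ w ∈ K, |j η v - j η w| ≤ Lj * ‖v - w‖)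
    (αj : ℝ) (hαj : 0 ≤ αj)
    (hjb : ∀ η₁ η₂ : Y, ∀ v₁ ∈ K, ∀ v₂ ∈ K,
      j η₁ v₂ - j η₁ v₁ + j η₂ v₁ - j η₂ v₂ ≤ αj * ‖η₁ - η₂‖ * ‖v₁ - v₂‖)
    (f : ℝ → X) (hf : Continuous f) :
    ∃ u w : ℝ → X,
      (Continuous u ∧ Continuous w ∧
        (∀ t ∈ Set.Icc (0:ℝ) T, HasDerivWithinAt u (w t) (Set.Icc (0:ℝ) T) t) ∧
        u 0 = u₀ ∧
        ∀ t ∈ Set.Icc (0:ℝ) T, w t ∈ K ∧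
          ∀ v ∈ K, j (R w t) v - j (R w t) (w t) ≥
            ⟪f t - A (w t) - B (u t) - S w t, v - w t⟫) ∧
      ∀ u' w' : ℝ → X,
        (Continuous u' ∧ Continuous w' ∧
          (∀ t ∈ Set.Icc (0:ℝ) T, HasDerivWithinAt u' (w' t) (Set.Icc (0:ℝ) T) t) ∧
          u' 0 = u₀ ∧
          ∀ t ∈ Set.Icc (0:ℝ) T, w' t ∈ K ∧
            ∀ v ∈ K, j (R w' t) v - j (R w' t) (w' t) ≥
              ⟪f t - A (w' t) - B (u' t) - S w' t, v - w' t⟫) →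
        ∀ t ∈ Set.Icc (0:ℝ) T, u' t = u t :=
  sweeping_process_existence_uniqueness_general hT K hKne hKcl A mA hmA hAmono hAlip B hBlip u₀ R S
    hRmap hSmap hR hS j hjconv hjlip αj hαj hjb f hf
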